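/- arXiv:2402.09787 — 2 statements merged into one kernel-verified Lean document; each statement's English description precedes it below -/
import Mathlib

section
/- Let ψ ∈ L^∞(𝕋) be not almost everywhere zero and let φ ∈ L⁴(𝕋) be the Riesz projection of ψ. Then ‖φ‖₄ = ‖ψ‖_∞ holds if and only if ψ̂(n) = 0 for every n < 0 and |ψ| = ‖ψ‖_∞ almost everywhere on 𝕋 (i.e. ψ is a constant multiple of an inner function). -/
open MeasureTheory Real Complex AddCircle

noncomputable section

instance : Fact (0 < 2 * Real.pi) := ⟨by positivity⟩

/-- `φ` is the Riesz projection of `ψ`: the Fourier coefficients of `φ` agree with those of `ψ`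
for nonnegative indices and vanish for negative indices. -/
def IsRieszProj (ψ φ : AddCircle (2 * Real.pi) → ℂ) : Prop :=
  (∀ n : ℤ, 0 ≤ n → fourierCoeff φ n = fourierCoeff ψ n) ∧
  (∀ n : ℤ, n < 0 → fourierCoeff φ n = 0)

/-!
Write `ψ = φ + d`. The coefficients of `φ` live on `n ≥ 0` and those of `d = ψ - φ` on `n < 0`,
hence so do those of `w = conj φ * d`; by Parseval `∫ w = 0` and `∫ w ^ 2 = 0`. Integrating the
pointwise identity (Marzo–Seip)
`(M - (|ψ|² - |d|²))² + 2 (M - |ψ|²) |φ|² + |φ|⁴ = M² - 4 M Re w + 2 Re w²`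
with `M = ‖ψ‖∞²`, where both terms on the left other than `|φ|⁴` are nonnegative, gives
`‖φ‖₄⁴ ≤ ‖ψ‖∞⁴`, with equality only if `|ψ|² - |d|² = M ≥ |ψ|²` a.e., i.e. `d = 0` and `|ψ| = ‖ψ‖∞`.
-/

open scoped ComplexConjugate ENNReal

section FourierCoeff

variable {T : ℝ} [Fact (0 < T)]

theorem integral_conj_mul_eq_tsum_fourierCoeff {F G : AddCircle T → ℂ}
    (hF : MemLp F 2 haarAddCircle) (hG : MemLp G 2 haarAddCircle) :
    ∫ x, conj (F x) * G x ∂haarAddCircle =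
      ∑' n : ℤ, conj (fourierCoeff F n) * fourierCoeff G n := by
  have repr_eq {H : AddCircle T → ℂ} (hH : MemLp H 2 haarAddCircle) (n : ℤ) :
      fourierBasis.repr (hH.toLp H) n = fourierCoeff H n := by
    rw [fourierBasis_repr, fourierCoeff_congr_ae hH.coeFn_toLp]
  calc ∫ x, conj (F x) * G x ∂haarAddCircle = inner ℂ (hF.toLp F) (hG.toLp G) := by
        rw [L2.inner_def]
        refine integral_congr_ae ?_
        filter_upwards [hF.coeFn_toLp, hG.coeFn_toLp] with x hFx hGx
        rw [RCLike.inner_apply', hFx, hGx]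
    _ = ∑' n, inner ℂ (hF.toLp F) (fourierBasis n) * inner ℂ (fourierBasis n) (hG.toLp G) :=
        (fourierBasis.tsum_inner_mul_inner _ _).symm
    _ = _ := by
        congr with n
        rw [← inner_conj_symm, ← HilbertBasis.repr_apply_apply, ← HilbertBasis.repr_apply_apply,
          repr_eq, repr_eq]

theorem integral_conj_mul_eq_zero_of_fourierCoeff {F G : AddCircle T → ℂ}
    (hF : MemLp F 2 haarAddCircle) (hG : MemLp G 2 haarAddCircle)
    (h : ∀ n, fourierCoeff F n = 0 ∨ fourierCoeff G n = 0) :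
    ∫ x, conj (F x) * G x ∂haarAddCircle = 0 := by
  rw [integral_conj_mul_eq_tsum_fourierCoeff hF hG]
  refine (tsum_congr fun n => ?_).trans tsum_zero
  rcases h n with h | h <;> simp [h]

theorem ae_eq_zero_of_fourierCoeff_eq_zero {F : AddCircle T → ℂ}
    (hF : MemLp F 2 haarAddCircle) (h : ∀ n, fourierCoeff F n = 0) :
    F =ᵐ[haarAddCircle] 0 := by
  have h0 : hF.toLp F = 0 := fourierBasis.repr.injective <| by
    ext n
    simp [fourierBasis_repr, fourierCoeff_congr_ae hF.coeFn_toLp, h]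
  filter_upwards [hF.coeFn_toLp, Lp.coeFn_zero ℂ 2 (haarAddCircle (T := T))] with x hx h0x
  rw [← hx, h0, h0x]

theorem fourierCoeff_sub {F G : AddCircle T → ℂ} (hF : Integrable F haarAddCircle)
    (hG : Integrable G haarAddCircle) (n : ℤ) :
    fourierCoeff (F - G) n = fourierCoeff F n - fourierCoeff G n := by
  simp only [fourierCoeff, Pi.sub_apply, smul_sub]
  exact integral_sub (hF.fourier_smul (-n)) (hG.fourier_smul (-n))

theorem fourierCoeff_conj (F : AddCircle T → ℂ) (n : ℤ) :
    fourierCoeff (fun x => conj (F x)) n = conj (fourierCoeff F (-n)) := by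
  simp only [fourierCoeff, ← integral_conj, smul_eq_mul, map_mul, neg_neg, fourier_neg]

theorem fourierCoeff_mul_fourier (F : AddCircle T → ℂ) (m n : ℤ) :
    fourierCoeff (fun x => F x * fourier m x) n = fourierCoeff F (n - m) := by
  simp only [fourierCoeff, smul_eq_mul, neg_sub', sub_neg_eq_add]
  congr with x
  rw [fourier_add]
  ring

theorem memLp_mul_fourier {p : ℝ≥0∞} {F : AddCircle T → ℂ} (hF : MemLp F p haarAddCircle)
    (m : ℤ) : MemLp (fun x => F x * fourier m x) p haarAddCircle :=
  (memLp_top_of_bound (map_continuous (fourier m)).aestronglyMeasurable 1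
    (.of_forall fun x => by simp [fourier_apply, Circle.norm_coe])).mul' hF

theorem fourierCoeff_conj_mul_eq_zero {F G : AddCircle T → ℂ}
    (hF : MemLp F 2 haarAddCircle) (hG : MemLp G 2 haarAddCircle)
    (hF_neg : ∀ n < 0, fourierCoeff F n = 0) (hG_nonneg : ∀ n, 0 ≤ n → fourierCoeff G n = 0)
    {n : ℤ} (hn : 0 ≤ n) : fourierCoeff (fun x => conj (F x) * G x) n = 0 := by
  have h : fourierCoeff (fun x => conj (F x) * G x) n =
      ∫ x, conj (F x) * (G x * fourier (-n) x) ∂haarAddCircle := by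
    simp only [fourierCoeff, smul_eq_mul]
    congr with x
    ring
  rw [h]
  refine integral_conj_mul_eq_zero_of_fourierCoeff hF (memLp_mul_fourier hG _) fun m => ?_
  rw [fourierCoeff_mul_fourier, sub_neg_eq_add]
  rcases lt_or_ge m 0 with hm | hm
  · exact .inl (hF_neg m hm)
  · exact .inr (hG_nonneg _ (by omega))

theorem integral_sq_eq_zero_of_fourierCoeff {w : AddCircle T → ℂ} (hw : MemLp w 2 haarAddCircle)
    (h : ∀ n, 0 ≤ n → fourierCoeff w n = 0) : ∫ x, w x ^ 2 ∂haarAddCircle = 0 := by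
  calc ∫ x, w x ^ 2 ∂haarAddCircle = ∫ x, conj (conj (w x)) * w x ∂haarAddCircle := by
        simp [sq]
    _ = 0 := integral_conj_mul_eq_zero_of_fourierCoeff hw.star hw fun n => by
        rw [fourierCoeff_conj, map_eq_zero]
        rcases le_or_gt 0 n with hn | hn
        · exact .inr (h n hn)
        · exact .inl (h _ (by omega))

end FourierCoeff

section LpNorm

variable {α E : Type*} [MeasurableSpace α] {μ : Measure α} [NormedAddCommGroup E]

theorem integral_norm_pow_eq_lpNorm_pow {f : α → E} (hf : AEStronglyMeasurable f μ) {n : ℕ}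
    (hn : n ≠ 0) :
    ∫ x, ‖f x‖ ^ n ∂μ = lpNorm f n μ ^ n := by
  rw [← ENNReal.coe_natCast, lpNorm_nnreal_eq_integral_norm_rpow (by exact_mod_cast hn) hf]
  simp only [NNReal.coe_natCast, Real.rpow_natCast]
  exact (Real.rpow_inv_natCast_pow (integral_nonneg fun x => by positivity) hn).symm

theorem eLpNorm_of_norm_ae_eq_const [IsProbabilityMeasure μ] {f : α → E} {r : ℝ}
    (h : ∀ᵐ x ∂μ, ‖f x‖ = r) {p : ℝ≥0∞} (hp : p ≠ 0) : eLpNorm f p μ = ‖r‖ₑ := by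
  rw [eLpNorm_congr_norm_ae (g := fun _ => r) (h.mono fun x hx => by simp [← hx]),
    eLpNorm_const _ hp (IsProbabilityMeasure.ne_zero μ)]
  simp

end LpNorm

instance : ENNReal.HolderTriple 4 4 2 :=
  ⟨by
    rw [← ENNReal.toReal_eq_toReal_iff' (by simp) (by simp), ENNReal.toReal_add (by simp) (by simp)]
    norm_num⟩

section MarzoSeip

variable {α : Type*} [MeasurableSpace α] {μ : Measure α} [IsProbabilityMeasure μ]

theorem Complex.marzoSeip_identity (p f : ℂ) (M : ℝ) :
    (M - (‖f‖ ^ 2 - ‖f - p‖ ^ 2)) ^ 2 + 2 * (M - ‖f‖ ^ 2) * ‖p‖ ^ 2 + ‖p‖ ^ 4 =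
      M ^ 2 - 4 * M * (conj p * (f - p)).re + 2 * ((conj p * (f - p)) ^ 2).re := by
  rw [show ‖p‖ ^ 4 = (‖p‖ ^ 2) ^ 2 by ring]
  simp only [Complex.sq_norm]
  simp only [Complex.normSq_apply, pow_two, Complex.mul_re,
    Complex.mul_im, Complex.conj_re, Complex.conj_im, Complex.sub_re, Complex.sub_im]
  ring

theorem integrable_and_integral_marzoSeip {p f : α → ℂ} (hp : MemLp p 4 μ) (hf : MemLp f 4 μ)
    (h₁ : ∫ x, conj (p x) * (f x - p x) ∂μ = 0)
    (h₂ : ∫ x, (conj (p x) * (f x - p x)) ^ 2 ∂μ = 0) (M : ℝ) :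
    Integrable (fun x =>
      (M - (‖f x‖ ^ 2 - ‖f x - p x‖ ^ 2)) ^ 2 + 2 * (M - ‖f x‖ ^ 2) * ‖p x‖ ^ 2) μ ∧
    ∫ x, ((M - (‖f x‖ ^ 2 - ‖f x - p x‖ ^ 2)) ^ 2 + 2 * (M - ‖f x‖ ^ 2) * ‖p x‖ ^ 2) ∂μ =
      M ^ 2 - ∫ x, ‖p x‖ ^ 4 ∂μ := by
  set w : α → ℂ := fun x => conj (p x) * (f x - p x)
  have hw : MemLp w 2 μ := (hf.sub hp).mul' hp.star
  have hw₁ : Integrable w μ := hw.integrable (by norm_num)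
  have hw₂ : Integrable (fun x => w x ^ 2) μ :=
    (hw.integrable_mul hw).congr (.of_forall fun x => (sq (w x)).symm)
  have hp₄ : Integrable (fun x => ‖p x‖ ^ 4) μ := hp.integrable_norm_pow (by norm_num)
  have hre₁ : Integrable (fun x => 4 * M * (w x).re) μ := hw₁.re.const_mul _
  have hre₂ : Integrable (fun x => 2 * (w x ^ 2).re) μ := hw₂.re.const_mul _
  have hre₀ : Integrable (fun x => M ^ 2 - 4 * M * (w x).re) μ := (integrable_const _).sub hre₁
  have hid : ∀ x, (M - (‖f x‖ ^ 2 - ‖f x - p x‖ ^ 2)) ^ 2 + 2 * (M - ‖f x‖ ^ 2) * ‖p x‖ ^ 2 =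
      (M ^ 2 - 4 * M * (w x).re + 2 * (w x ^ 2).re) - ‖p x‖ ^ 4 := fun x => by
    rw [← Complex.marzoSeip_identity]; ring
  have hint₁ : ∫ x, (w x).re ∂μ = (∫ x, w x ∂μ).re := integral_re hw₁
  have hint₂ : ∫ x, (w x ^ 2).re ∂μ = (∫ x, w x ^ 2 ∂μ).re := integral_re hw₂
  have hg : Integrable (fun x => M ^ 2 - 4 * M * (w x).re + 2 * (w x ^ 2).re) μ := hre₀.add hre₂
  simp only [hid]
  refine ⟨hg.sub hp₄, ?_⟩
  rw [integral_sub hg hp₄, integral_add hre₀ hre₂, integral_sub (integrable_const _) hre₁,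
    integral_const_mul, integral_const_mul, hint₁, hint₂, h₁, h₂]
  simp

theorem ae_eq_and_norm_eq_of_integral_norm_pow_four_eq {p f : α → ℂ} {c : ℝ}
    (hp : MemLp p 4 μ) (hf : MemLp f 4 μ)
    (h₁ : ∫ x, conj (p x) * (f x - p x) ∂μ = 0)
    (h₂ : ∫ x, (conj (p x) * (f x - p x)) ^ 2 ∂μ = 0)
    (hfc : ∀ᵐ x ∂μ, ‖f x‖ ≤ c) (heq : ∫ x, ‖p x‖ ^ 4 ∂μ = c ^ 4) :
    ∀ᵐ x ∂μ, f x = p x ∧ ‖f x‖ = c := by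
  obtain ⟨hint, hval⟩ := integrable_and_integral_marzoSeip hp hf h₁ h₂ (c ^ 2)
  have hsq : ∀ᵐ x ∂μ, ‖f x‖ ^ 2 ≤ c ^ 2 :=
    hfc.mono fun x hx => pow_le_pow_left₀ (norm_nonneg _) hx 2
  have hnonneg : 0 ≤ᵐ[μ] fun x =>
      (c ^ 2 - (‖f x‖ ^ 2 - ‖f x - p x‖ ^ 2)) ^ 2 + 2 * (c ^ 2 - ‖f x‖ ^ 2) * ‖p x‖ ^ 2 :=
    hsq.mono fun x hx => by dsimp only [Pi.zero_apply]; nlinarith [sq_nonneg (‖p x‖)]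
  have hzero := (integral_eq_zero_iff_of_nonneg_ae hnonneg hint).mp (by rw [hval, heq]; ring)
  filter_upwards [hzero, hsq, hfc] with x hx hxsq hxc
  simp only [Pi.zero_apply] at hx
  have hR : c ^ 2 - (‖f x‖ ^ 2 - ‖f x - p x‖ ^ 2) = 0 := by
    nlinarith [sq_nonneg (c ^ 2 - (‖f x‖ ^ 2 - ‖f x - p x‖ ^ 2)), sq_nonneg (‖p x‖)]
  have hfp : ‖f x - p x‖ = 0 := by nlinarith [norm_nonneg (f x - p x)]
  refine ⟨sub_eq_zero.mp (norm_eq_zero.mp hfp), ?_⟩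
  rw [hfp] at hR
  nlinarith [norm_nonneg (f x)]

end MarzoSeip

namespace IsRieszProj

variable {ψ φ : AddCircle (2 * Real.pi) → ℂ}

theorem fourierCoeff_sub_of_nonneg (hproj : IsRieszProj ψ φ) (hψ : Integrable ψ haarAddCircle)
    (hφ : Integrable φ haarAddCircle) {n : ℤ} (hn : 0 ≤ n) : fourierCoeff (ψ - φ) n = 0 := by
  rw [fourierCoeff_sub hψ hφ, hproj.1 n hn, sub_self]

theorem fourierCoeff_sub_of_neg (hproj : IsRieszProj ψ φ) (hψ : Integrable ψ haarAddCircle)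
    (hφ : Integrable φ haarAddCircle) {n : ℤ} (hn : n < 0) :
    fourierCoeff (ψ - φ) n = fourierCoeff ψ n := by
  rw [fourierCoeff_sub hψ hφ, hproj.2 n hn, sub_zero]

end IsRieszProj

theorem riesz_projection_Linfty_to_L4_equality_general
    (ψ φ : AddCircle (2 * Real.pi) → ℂ)
    (hψ : MemLp ψ ⊤ haarAddCircle)
    (hφ : MemLp φ 4 haarAddCircle)
    (hproj : IsRieszProj ψ φ) :
    eLpNorm φ 4 haarAddCircle = eLpNorm ψ ⊤ haarAddCircle ↔
      ((∀ n : ℤ, n < 0 → fourierCoeff ψ n = 0) ∧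
        (∀ᵐ x ∂haarAddCircle,
          ‖ψ x‖ = (eLpNorm ψ ⊤ haarAddCircle).toReal)) := by
  have hψ₄ : MemLp ψ 4 haarAddCircle := hψ.mono_exponent le_top
  have hφ₂ : MemLp φ 2 haarAddCircle := hφ.mono_exponent (by norm_num)
  have hd : MemLp (ψ - φ) 2 haarAddCircle := (hψ₄.sub hφ).mono_exponent (by norm_num)
  have hψ₁ : Integrable ψ haarAddCircle := hψ.integrable le_top
  have hφ₁ : Integrable φ haarAddCircle := hφ.integrable (by norm_num)
  have hd_nonneg : ∀ n, 0 ≤ n → fourierCoeff (ψ - φ) n = 0 := fun n hn =>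
    hproj.fourierCoeff_sub_of_nonneg hψ₁ hφ₁ hn
  rw [toReal_eLpNorm hψ.1]
  constructor
  · intro heq
    have h₁ : ∫ x, conj (φ x) * (ψ x - φ x) ∂haarAddCircle = 0 :=
      integral_conj_mul_eq_zero_of_fourierCoeff hφ₂ hd fun n =>
        (lt_or_ge n 0).imp (hproj.2 n) (hd_nonneg n)
    have h₂ : ∫ x, (conj (φ x) * (ψ x - φ x)) ^ 2 ∂haarAddCircle = 0 :=
      integral_sq_eq_zero_of_fourierCoeff ((hψ₄.sub hφ).mul' hφ.star) fun n hn =>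
        fourierCoeff_conj_mul_eq_zero hφ₂ hd hproj.2 hd_nonneg hn
    have hφ_pow : ∫ x, ‖φ x‖ ^ 4 ∂haarAddCircle = lpNorm ψ ⊤ haarAddCircle ^ 4 := by
      rw [integral_norm_pow_eq_lpNorm_pow hφ.1 four_ne_zero, ← toReal_eLpNorm hφ.1, Nat.cast_ofNat,
        heq, toReal_eLpNorm hψ.1]
    have hae := ae_eq_and_norm_eq_of_integral_norm_pow_four_eq hφ hψ₄ h₁ h₂
      (ae_le_lpNorm_exponent_top hψ) hφ_pow
    refine ⟨fun n hn => ?_, hae.mono fun x hx => hx.2⟩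
    rw [fourierCoeff_congr_ae (hae.mono fun x hx => hx.1), hproj.2 n hn]
  · rintro ⟨hψ_neg, hψ_norm⟩
    have hψφ : ψ =ᵐ[haarAddCircle] φ := by
      have hd_zero := ae_eq_zero_of_fourierCoeff_eq_zero hd fun n => (lt_or_ge n 0).elim
        (fun hn => (hproj.fourierCoeff_sub_of_neg hψ₁ hφ₁ hn).trans (hψ_neg n hn)) (hd_nonneg n)
      filter_upwards [hd_zero] with x hx using sub_eq_zero.mp hx
    rw [← eLpNorm_congr_ae hψφ, eLpNorm_of_norm_ae_eq_const hψ_norm four_ne_zero,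
      eLpNorm_of_norm_ae_eq_const hψ_norm ENNReal.top_ne_zero]

/-- For `ψ ∈ L^∞(𝕋)` not a.e. zero with Riesz projection `φ ∈ L⁴(𝕋)`, equality
`‖φ‖₄ = ‖ψ‖_∞` holds if and only if `ψ̂(n) = 0` for all `n < 0` and `|ψ| = ‖ψ‖_∞` a.e., i.e. `ψ`
is a constant multiple of an inner function. -/
theorem riesz_projection_Linfty_to_L4_equality
    (ψ φ : AddCircle (2 * Real.pi) → ℂ)
    (hψ : MemLp ψ ⊤ haarAddCircle) (hψ0 : ¬ (ψ =ᵐ[haarAddCircle] 0))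
    (hφ : MemLp φ 4 haarAddCircle)
    (hproj : IsRieszProj ψ φ) :
    eLpNorm φ 4 haarAddCircle = eLpNorm ψ ⊤ haarAddCircle ↔
      ((∀ n : ℤ, n < 0 → fourierCoeff ψ n = 0) ∧
        (∀ᵐ x ∂haarAddCircle,
          ‖ψ x‖ = (eLpNorm ψ ⊤ haarAddCircle).toReal)) :=
  riesz_projection_Linfty_to_L4_equality_general ψ φ hψ hφ hproj
end
end

section
/- Let s ≥ 1 be a real number with s ≠ 2, let p = 4/s, and let w be a complex number with 0 < |w| < 1. Then the inequality is strict: (1/2π) ∫₀^{2π} |1 − w̄ e^{iθ}|^{−p} dθ < (1 − |w|²)^{−p/s}. (For s = 2, i.e. p = 2, equality holds for every w.) -/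
/-!
With `a = 2 / s` we have `p = 2a` and `p / s = a²`. Writing `ζ = w̄ e^{iθ}` and
`(1 - ζ)^{-a} = ∑ₙ c_n(a) ζⁿ` with `c_n(a) = a(a+1)⋯(a+n-1)/n! = Ring.multichoose a n`,
Parseval's identity turns the mean of `|1 - ζ|^{-2a} = |(1 - ζ)^{-a}|²` into
`∑ₙ c_n(a)² |w|^{2n}`, while the binomial series gives `(1 - |w|²)^{-a²} = ∑ₙ c_n(a²) |w|^{2n}`.
The recursion `c_{n+1}(a) = c_n(a)(a+n)/(n+1)` and `(a+n)² ≤ (a²+n)(n+1)` give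
`c_n(a)² ≤ c_n(a²)`, strictly for `n = 2` unless `a ∈ {0, 1}`.
-/

open MeasureTheory Real Complex

namespace Ring

section Field

variable {K : Type*} [Field K] [CharZero K]

lemma multichoose_succ_eq (a : K) (n : ℕ) :
    multichoose a (n + 1) = multichoose a n * (a + n) / (n + 1) := by
  have h := factorial_nsmul_multichoose_eq_ascPochhammer a
  have h1 := h (n + 1)
  rw [ascPochhammer_succ_right, Polynomial.smeval_mul, ← h n] at h1
  simp only [Nat.factorial_succ, Polynomial.smeval_add, Polynomial.smeval_X,
    Polynomial.smeval_natCast] at h1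
  have hf : (n.factorial : K) ≠ 0 := Nat.cast_ne_zero.mpr n.factorial_ne_zero
  rw [eq_div_iff (by exact_mod_cast n.succ_ne_zero)]
  apply mul_left_cancel₀ hf
  linear_combination h1

lemma multichoose_two_right (a : K) : multichoose a 2 = a * (a + 1) / 2 := by
  rw [multichoose_succ_eq, multichoose_one_right]
  norm_num

end Field

variable {K : Type*} [Field K] [LinearOrder K] [IsStrictOrderedRing K]

lemma multichoose_nonneg {a : K} (ha : 0 ≤ a) (n : ℕ) : 0 ≤ multichoose a n := by
  induction n with
  | zero => simp
  | succ n ih => rw [multichoose_succ_eq]; positivity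

lemma sq_multichoose_le_multichoose_sq (a : K) (n : ℕ) :
    multichoose a n ^ 2 ≤ multichoose (a ^ 2) n := by
  induction n with
  | zero => simp
  | succ n ih =>
    have hstep : (a + n) ^ 2 ≤ (a ^ 2 + n) * (n + 1) := by
      nlinarith [mul_nonneg (Nat.cast_nonneg n : (0:K) ≤ n) (sq_nonneg (a - 1))]
    rw [multichoose_succ_eq, multichoose_succ_eq, div_pow, mul_pow, div_le_div_iff₀ (by positivity)
      (by positivity)]
    calc multichoose a n ^ 2 * (a + n) ^ 2 * (n + 1)
        ≤ multichoose (a ^ 2) n * ((a ^ 2 + n) * (n + 1)) * (n + 1) := by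
          gcongr
          · exact multichoose_nonneg (sq_nonneg a) n
      _ = _ := by ring

lemma sq_multichoose_two_lt {a : K} (ha0 : a ≠ 0) (ha1 : a ≠ 1) :
    multichoose a 2 ^ 2 < multichoose (a ^ 2) 2 := by
  rw [multichoose_two_right, multichoose_two_right]
  have : 0 < a ^ 2 * (a - 1) ^ 2 := by
    have := sub_ne_zero.mpr ha1
    positivity
  nlinarith

end Ring

lemma intervalIntegral_exp_int_mul_I (k : ℤ) :
    ∫ θ in (0 : ℝ)..2 * π, exp (k * θ * I) = if k = 0 then (2 * π : ℂ) else 0 := by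
  split_ifs with hk
  · simp [hk]
  have hkI : (k : ℂ) * I ≠ 0 := by simpa using hk
  have hperiod : exp ((k : ℂ) * I * (2 * π : ℝ)) = 1 := by
    rw [← exp_int_mul_two_pi_mul_I k]; push_cast; ring_nf
  simp_rw [mul_right_comm _ _ I]
  rw [integral_exp_mul_complex hkI, hperiod]
  simp

lemma norm_exp_intCast_mul_ofReal_mul_I (k : ℤ) (θ : ℝ) : ‖exp (k * θ * I)‖ = 1 := by
  rw [← ofReal_intCast, ← ofReal_mul, norm_exp_ofReal_mul_I]

section PowerSeriesOnCircle

variable {c : ℕ → ℂ}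

lemma fourierCoeffOn_tsum_mul_exp (hc : Summable (‖c ·‖)) (i : ℤ) :
    fourierCoeffOn two_pi_pos (fun θ => ∑' n, c n * exp (n * θ * I)) i
      = ∑' n : ℕ, if (n : ℤ) = i then c n else 0 := by
  have hterm : ∀ θ : ℝ, fourier (-i) (θ : AddCircle (2 * π - 0)) • ∑' n, c n * exp (n * θ * I)
      = ∑' n : ℕ, c n * exp (((n : ℤ) - i : ℤ) * θ * I) := by
    intro θ
    rw [fourier_coe_apply, smul_eq_mul, ← tsum_mul_left]
    congr 1 with n
    rw [mul_left_comm, ← Complex.exp_add]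
    congr 2
    push_cast
    field_simp
    ring
  have hsum : HasSum (fun n : ℕ => ∫ θ in (0 : ℝ)..2 * π, c n * exp (((n : ℤ) - i : ℤ) * θ * I))
      (∫ θ in (0 : ℝ)..2 * π, ∑' n : ℕ, c n * exp (((n : ℤ) - i : ℤ) * θ * I)) := by
    have hbound : ∀ n (θ : ℝ), ‖c n * exp (((n : ℤ) - i : ℤ) * θ * I)‖ ≤ ‖c n‖ := fun n θ => by
      rw [norm_mul, norm_exp_intCast_mul_ofReal_mul_I, mul_one]
    refine intervalIntegral.hasSum_integral_of_dominated_convergence (fun n _ => ‖c n‖)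
      (fun n => (by fun_prop : Continuous _).aestronglyMeasurable)
      (fun n => ae_of_all _ fun θ _ => hbound n θ) (ae_of_all _ fun _ _ => hc)
      intervalIntegrable_const
      (ae_of_all _ fun θ _ => (hc.of_norm_bounded (hbound · θ)).hasSum)
  rw [fourierCoeffOn_eq_integral]
  simp only [hterm]
  simp_rw [← hsum.tsum_eq, intervalIntegral.integral_const_mul,
    intervalIntegral_exp_int_mul_I, sub_eq_zero]
  rw [real_smul, sub_zero, ← tsum_mul_left]
  congr 1 with n
  split_ifs
  · push_cast
    field_simp
  · rw [mul_zero, mul_zero]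

lemma hasSum_sq_norm_of_tsum_mul_exp (hc : Summable (‖c ·‖)) :
    HasSum (fun n => ‖c n‖ ^ 2)
      ((2 * π)⁻¹ * ∫ θ in (0 : ℝ)..2 * π, ‖∑' n, c n * exp (n * θ * I)‖ ^ 2) := by
  have hbound : ∀ n (θ : ℝ), ‖c n * exp (n * θ * I)‖ ≤ ‖c n‖ := fun n θ => by
    rw [norm_mul, ← Int.cast_natCast, norm_exp_intCast_mul_ofReal_mul_I, mul_one]
  have hcont : Continuous fun θ : ℝ => ∑' n, c n * exp (n * θ * I) :=
    continuous_tsum (fun n => by fun_prop) hc hbound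
  have hL2 : MemLp (fun θ : ℝ => ∑' n, c n * exp (n * θ * I)) 2
      (volume.restrict (Set.Ioc 0 (2 * π))) := by
    have hsumθ : ∀ θ : ℝ, Summable fun n => ‖c n * exp (n * θ * I)‖ := fun θ =>
      hc.of_nonneg_of_le (fun _ => norm_nonneg _) (hbound · θ)
    exact .of_bound hcont.aestronglyMeasurable _ (ae_of_all _ fun θ =>
        (norm_tsum_le_tsum_norm (hsumθ θ)).trans ((hsumθ θ).tsum_le_tsum (hbound · θ) hc))
  have hP := hasSum_sq_fourierCoeffOn two_pi_pos hL2
  rw [sub_zero, smul_eq_mul] at hP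
  rw [← Nat.cast_injective.hasSum_iff] at hP
  · convert hP using 2 with n
    simp [fourierCoeffOn_tsum_mul_exp hc]
  · rintro i hi
    rw [fourierCoeffOn_tsum_mul_exp hc, sq_eq_zero_iff, norm_eq_zero]
    exact (tsum_congr fun n => if_neg fun h => hi ⟨n, h⟩).trans tsum_zero

end PowerSeriesOnCircle

lemma Complex.hasSum_multichoose_mul_pow (a : ℂ) {z : ℂ} (hz : ‖z‖ < 1) :
    HasSum (fun n => Ring.multichoose a n * z ^ n) ((1 - z) ^ a)⁻¹ := by
  have h := (one_div_one_sub_cpow_hasFPowerSeriesOnBall_zero a).hasSum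
    (y := z) (by simpa [enorm_eq_nnnorm, ← NNReal.coe_lt_one] using hz)
  simpa [FormalMultilinearSeries.ofScalars_apply_eq, ← Ring.multichoose_eq, mul_comm (_ ^ _)]
    using h

lemma Real.hasSum_multichoose_mul_pow (a : ℝ) {x : ℝ} (hx : |x| < 1) :
    HasSum (fun n => Ring.multichoose a n * x ^ n) ((1 - x) ^ a)⁻¹ := by
  have h := (one_div_one_sub_rpow_hasFPowerSeriesOnBall_zero a).hasSum
    (y := x) (by simpa [enorm_eq_nnnorm, ← NNReal.coe_lt_one] using hx)
  simpa [FormalMultilinearSeries.ofScalars_apply_eq, ← Ring.multichoose_eq, mul_comm (_ ^ _)]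
    using h

lemma Complex.summable_norm_multichoose_mul_pow (a : ℂ) {z : ℂ} (hz : ‖z‖ < 1) :
    Summable fun n => ‖Ring.multichoose a n * z ^ n‖ := by
  have h := (one_div_one_sub_cpow_hasFPowerSeriesOnBall_zero a).r_le
  have := FormalMultilinearSeries.summable_norm_mul_pow _ (r := ‖z‖₊)
    (lt_of_lt_of_le (by exact_mod_cast hz) h)
  simpa [FormalMultilinearSeries.ofScalars_norm, ← Ring.multichoose_eq] using this

lemma norm_inv_cpow_ofReal_sq (z : ℂ) (a : ℝ) : ‖(z ^ (a : ℂ))⁻¹‖ ^ 2 = ‖z‖ ^ (-(2 * a)) := by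
  rw [norm_inv, norm_cpow_real, ← rpow_neg (norm_nonneg z), ← rpow_natCast,
    ← rpow_mul (norm_nonneg z)]
  ring_nf

theorem hasSum_sq_multichoose_mul_pow_mean_norm_one_sub_rpow (a : ℝ) {u : ℂ} (hu : ‖u‖ < 1) :
    HasSum (fun n => Ring.multichoose a n ^ 2 * (‖u‖ ^ 2) ^ n)
      ((2 * π)⁻¹ * ∫ θ in (0 : ℝ)..2 * π, ‖1 - u * exp (θ * I)‖ ^ (-(2 * a))) := by
  set c : ℕ → ℂ := fun n => Ring.multichoose (a : ℂ) n * u ^ n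
  have hc : Summable (‖c ·‖) := Complex.summable_norm_multichoose_mul_pow a hu
  have hpoint : ∀ θ : ℝ, ∑' n, c n * exp (n * θ * I) = ((1 - u * exp (θ * I)) ^ (a : ℂ))⁻¹ := by
    intro θ
    refine HasSum.tsum_eq ?_
    convert Complex.hasSum_multichoose_mul_pow a (z := u * exp (θ * I)) (by simpa using hu)
      using 2 with n
    rw [mul_pow, ← Complex.exp_nat_mul]
    simp only [c]
    ring_nf
  have hcoef : ∀ n, ‖c n‖ ^ 2 = Ring.multichoose a n ^ 2 * (‖u‖ ^ 2) ^ n := by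
    intro n
    have hcast : Ring.multichoose (a : ℂ) n = ofReal (Ring.multichoose a n) :=
      (Ring.map_multichoose ofRealHom a n).symm
    rw [norm_mul, hcast, norm_real, norm_pow, mul_pow, Real.norm_eq_abs, sq_abs, ← pow_mul,
      ← pow_mul, mul_comm n]
  have := hasSum_sq_norm_of_tsum_mul_exp hc
  simp only [hcoef, hpoint, norm_inv_cpow_ofReal_sq] at this
  exact this

/-- For `s ≥ 1` with `s ≠ 2`, `p = 4/s`, and `0 < |w| < 1`, the inequality is
strict: `(1/2π) ∫₀^{2π} |1 - w̄ e^{iθ}|^{-p} dθ < (1 - |w|²)^{-p/s}`. -/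
theorem szego_kernel_pth_mean_bound_strict
    (s : ℝ) (hs : 1 ≤ s) (hs2 : s ≠ 2) (p : ℝ) (hp : p = 4 / s)
    (w : ℂ) (hw0 : 0 < ‖w‖) (hw1 : ‖w‖ < 1) :
    (2 * Real.pi)⁻¹ * ∫ θ in (0:ℝ)..(2 * Real.pi),
        (‖1 - (starRingEnd ℂ) w * Complex.exp ((θ : ℂ) * Complex.I)‖) ^ (-p)
      < (1 - ‖w‖ ^ 2) ^ (-(p / s)) := by
  have hs0 : 0 < s := by linarith
  set a := 2 / s with ha
  have ha0 : a ≠ 0 := by positivity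
  have ha1 : a ≠ 1 := fun h => hs2 (by rw [div_eq_one_iff_eq hs0.ne'] at h; exact h.symm)
  have hpa : p = 2 * a := by rw [hp]; ring
  have hpsa : p / s = a ^ 2 := by rw [hp, ha]; field_simp; ring
  have hr0 : 0 < ‖w‖ ^ 2 := by positivity
  have hr1 : |‖w‖ ^ 2| < 1 := by rw [abs_of_pos hr0]; nlinarith
  have hmean :=
    hasSum_sq_multichoose_mul_pow_mean_norm_one_sub_rpow a (u := (starRingEnd ℂ) w) (by simpa)
  have hbinom := Real.hasSum_multichoose_mul_pow (a ^ 2) hr1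
  rw [norm_conj] at hmean
  rw [hpsa, hpa, rpow_neg (by linarith [abs_lt.mp hr1])]
  exact hasSum_lt (i := 2)
    (fun n => mul_le_mul_of_nonneg_right (Ring.sq_multichoose_le_multichoose_sq a n)
      (pow_nonneg hr0.le n))
    (mul_lt_mul_of_pos_right (Ring.sq_multichoose_two_lt ha0 ha1) (pow_pos hr0 2)) hmean hbinom
end
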